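/- arXiv:2108.06823 — 6 statements merged into one kernel-verified Lean document; each statement's English description precedes it below -/
import Mathlib

section
/- The frame vector fields satisfy, at every point of D, the Lie bracket relations [E₁, E₂] = 2τ E₃, [E₂, E₃] = σ E₁ and [E₃, E₁] = σ E₂, where [X,Y](p) = DY(p)(X(p)) − DX(p)(Y(p)) is the Lie bracket of vector fields on an open subset of ℝ³. -/
noncomputable section

open Real

/-- Points/vectors of `ℝ³`. -/
abbrev V3 : Type := ℝ × ℝ × ℝ

/-- The domain `D`: all of `ℝ³` if `κ ≥ 0`, the solid cylinder
`{x² + y² < -4/κ}` if `κ < 0`. -/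
def Dset (κ : ℝ) : Set V3 := {p | κ < 0 → p.1 ^ 2 + p.2.1 ^ 2 < -4 / κ}

/-- The conformal factor `λ`. -/
def lam (κ : ℝ) (p : V3) : ℝ := 1 / (1 + κ / 4 * (p.1 ^ 2 + p.2.1 ^ 2))

/-- The Riemannian BCV metric `g_R` at the point `p`, evaluated on vectors `u, v`. -/
def gR (κ τ : ℝ) (p u v : V3) : ℝ :=
  (lam κ p) ^ 2 * (u.1 * v.1 + u.2.1 * v.2.1) +
    (u.2.2 + τ * lam κ p * (p.2.1 * u.1 - p.1 * u.2.1)) *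
      (v.2.2 + τ * lam κ p * (p.2.1 * v.1 - p.1 * v.2.1))

/-- The Lorentzian BCV metric `g_L` at the point `p`, evaluated on vectors `u, v`. -/
def gL (κ τ : ℝ) (p u v : V3) : ℝ :=
  (lam κ p) ^ 2 * (u.1 * v.1 + u.2.1 * v.2.1) -
    (u.2.2 + τ * lam κ p * (p.2.1 * u.1 - p.1 * u.2.1)) *
      (v.2.2 + τ * lam κ p * (p.2.1 * v.1 - p.1 * v.2.1))

/-- The frame field `E₁` (with `σ = κ/(2τ)`). -/
def E1 (κ τ : ℝ) (p : V3) : V3 :=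
  ((lam κ p)⁻¹ * cos (κ / (2 * τ) * p.2.2),
   (lam κ p)⁻¹ * sin (κ / (2 * τ) * p.2.2),
   τ * (p.1 * sin (κ / (2 * τ) * p.2.2) - p.2.1 * cos (κ / (2 * τ) * p.2.2)))

/-- The frame field `E₂` (with `σ = κ/(2τ)`). -/
def E2 (κ τ : ℝ) (p : V3) : V3 :=
  (-((lam κ p)⁻¹ * sin (κ / (2 * τ) * p.2.2)),
   (lam κ p)⁻¹ * cos (κ / (2 * τ) * p.2.2),
   τ * (p.1 * cos (κ / (2 * τ) * p.2.2) + p.2.1 * sin (κ / (2 * τ) * p.2.2)))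

/-- The (constant) frame field `E₃ = ∂_z`. -/
def E3 : V3 := (0, 0, 1)

/-- The Killing field `ξ = E₃`. -/
def xi : V3 := E3

/-- First coefficient of a vector in the frame `{E₁,E₂,E₃}` (extracted with `g_R`;
the frame is `g_R`-orthonormal on `D`). -/
def c1 (κ τ : ℝ) (p : V3) (u : V3) : ℝ := gR κ τ p u (E1 κ τ p)

/-- Second frame coefficient. -/
def c2 (κ τ : ℝ) (p : V3) (u : V3) : ℝ := gR κ τ p u (E2 κ τ p)

/-- Third frame coefficient. -/
def c3 (κ τ : ℝ) (p : V3) (u : V3) : ℝ := gR κ τ p u E3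

/-- The Riemannian cross product `u ∧_R v` at `p`. -/
def wedgeR (κ τ : ℝ) (p : V3) (u v : V3) : V3 :=
  (c2 κ τ p u * c3 κ τ p v - c3 κ τ p u * c2 κ τ p v) • E1 κ τ p
    - (c1 κ τ p u * c3 κ τ p v - c3 κ τ p u * c1 κ τ p v) • E2 κ τ p
    + (c1 κ τ p u * c2 κ τ p v - c2 κ τ p u * c1 κ τ p v) • E3

/-- The Lorentzian cross product `u ∧_L v` at `p`. -/
def wedgeL (κ τ : ℝ) (p : V3) (u v : V3) : V3 :=
  (c2 κ τ p u * c3 κ τ p v - c3 κ τ p u * c2 κ τ p v) • E1 κ τ p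
    - (c1 κ τ p u * c3 κ τ p v - c3 κ τ p u * c1 κ τ p v) • E2 κ τ p
    - (c1 κ τ p u * c2 κ τ p v - c2 κ τ p u * c1 κ τ p v) • E3

/-- The Lie bracket of vector fields on (an open subset of) `ℝ³`:
`[X,Y](p) = DY(p)(X(p)) − DX(p)(Y(p))`. -/
def lie (X Y : V3 → V3) (p : V3) : V3 :=
  fderiv ℝ Y p (X p) - fderiv ℝ X p (Y p)

/-- The explicit connection `∇ᴿ` of `𝔼³(κ,τ)`. -/
def nablaR (κ τ : ℝ) (X Y : V3 → V3) (p : V3) : V3 :=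
  (fderiv ℝ (fun q => c1 κ τ q (Y q)) p (X p)) • E1 κ τ p
    + (fderiv ℝ (fun q => c2 κ τ q (Y q)) p (X p)) • E2 κ τ p
    + (fderiv ℝ (fun q => c3 κ τ q (Y q)) p (X p)) • E3
    + (τ * c2 κ τ p (X p) * c3 κ τ p (Y p)) • E1 κ τ p
    - (τ * c1 κ τ p (X p) * c3 κ τ p (Y p)) • E2 κ τ p
    + (τ * (c1 κ τ p (X p) * c2 κ τ p (Y p) - c2 κ τ p (X p) * c1 κ τ p (Y p))) • E3
    + ((κ - 2 * τ ^ 2) / (2 * τ) * (c3 κ τ p (X p) * c1 κ τ p (Y p))) • E2 κ τ p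
    - ((κ - 2 * τ ^ 2) / (2 * τ) * (c3 κ τ p (X p) * c2 κ τ p (Y p))) • E1 κ τ p

/-- The explicit connection `∇ᴸ` of `𝕃³(κ,τ)`. -/
def nablaL (κ τ : ℝ) (X Y : V3 → V3) (p : V3) : V3 :=
  (fderiv ℝ (fun q => c1 κ τ q (Y q)) p (X p)) • E1 κ τ p
    + (fderiv ℝ (fun q => c2 κ τ q (Y q)) p (X p)) • E2 κ τ p
    + (fderiv ℝ (fun q => c3 κ τ q (Y q)) p (X p)) • E3
    - (τ * c2 κ τ p (X p) * c3 κ τ p (Y p)) • E1 κ τ p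
    + (τ * c1 κ τ p (X p) * c3 κ τ p (Y p)) • E2 κ τ p
    + (τ * (c1 κ τ p (X p) * c2 κ τ p (Y p) - c2 κ τ p (X p) * c1 κ τ p (Y p))) • E3
    + ((κ + 2 * τ ^ 2) / (2 * τ) * (c3 κ τ p (X p) * c1 κ τ p (Y p))) • E2 κ τ p
    - ((κ + 2 * τ ^ 2) / (2 * τ) * (c3 κ τ p (X p) * c2 κ τ p (Y p))) • E1 κ τ p

/-- `ω_L = √(ε + 2 g_L(N, ξ)²)`. -/
def omegaL (κ τ ε : ℝ) (p : V3) (N : V3) : ℝ :=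
  Real.sqrt (ε + 2 * (gL κ τ p N xi) ^ 2)

/-- `ω_R = 1/ω_L`. -/
def omegaR (κ τ ε : ℝ) (p : V3) (N : V3) : ℝ := 1 / omegaL κ τ ε p N

/-- The Riemannian unit normal `N_R = (1/ω_L)(√(2(ω_L² − ε)) ξ − N_L)`. -/
def NRof (κ τ ε : ℝ) (p : V3) (N : V3) : V3 :=
  (1 / omegaL κ τ ε p N) • (Real.sqrt (2 * ((omegaL κ τ ε p N) ^ 2 - ε)) • xi - N)

/-- `g_L(p)(n, ·)` as a linear form. -/
def gLlin (κ τ : ℝ) (p n : V3) : V3 →ₗ[ℝ] ℝ where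
  toFun v := gL κ τ p n v
  map_add' v w := by
    simp only [gL, Prod.fst_add, Prod.snd_add]
    ring
  map_smul' r v := by
    simp only [gL, Prod.smul_fst, Prod.smul_snd, smul_eq_mul, RingHom.id_apply]
    ring

/-- The tangent plane at `p` determined by the normal `n`:
`P_p = {v : g_L(n,v) = 0}`. -/
def Pp (κ τ : ℝ) (p n : V3) : Submodule ℝ V3 := LinearMap.ker (gLlin κ τ p n)

/-- The Lorentzian shape operator `A_L v = −∇ᴸ_v N_L`. -/
def AL (κ τ : ℝ) (NL : V3 → V3) (p : V3) (v : V3) : V3 :=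
  -(nablaL κ τ (fun _ => v) NL p)

/-- The Riemannian shape operator `A_R v = −∇ᴿ_v N_R`. -/
def AR (κ τ ε : ℝ) (NL : V3 → V3) (p : V3) (v : V3) : V3 :=
  -(nablaR κ τ (fun _ => v) (fun q => NRof κ τ ε q (NL q)) p)

/-- The tangential part `T_L = ξ − ε g_L(N_L, ξ) N_L`. -/
def TLof (κ τ ε : ℝ) (p : V3) (N : V3) : V3 := xi - (ε * gL κ τ p N xi) • N

/-- The tangential part `T_R = ξ − g_R(N_R, ξ) N_R`. -/
def TRof (κ τ ε : ℝ) (p : V3) (N : V3) : V3 :=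
  xi - (gR κ τ p (NRof κ τ ε p N) xi) • NRof κ τ ε p N

/-- The rotation `J_L v = N_L ∧_L v`. -/
def JL (κ τ : ℝ) (p : V3) (N : V3) (v : V3) : V3 := wedgeL κ τ p N v

/-- The rotation `J_R v = N_R ∧_R v`. -/
def JR (κ τ : ℝ) (p : V3) (N : V3) (v : V3) : V3 := wedgeR κ τ p N v

/-! `E₁` and `E₂` are the phases `φ = 0` and `φ = π/2` of the rotating frame
`F_φ = cos(σz + φ) (λ⁻¹∂ₓ − τy∂_z) + sin(σz + φ) (λ⁻¹∂_y + τx∂_z)`.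
Since `E₃ = ∂_z` is constant, `[E₃, F_φ] = ∂_z F_φ = σ F_{φ+π/2}`, which gives the two
brackets with `E₃`. In `[F_φ, F_{φ+π/2}]` the horizontal part is `λ⁻¹ (στ − κ/2) (y∂ₓ − x∂_y)`
and the vertical part is `τ (2λ⁻¹ − στ (x² + y²)) ∂_z`; with `λ⁻¹ = 1 + κ(x² + y²)/4`, the
bracket is `2τ ∂_z` exactly when `κ = 2στ`. -/

theorem inv_lam (κ : ℝ) (p : V3) : (lam κ p)⁻¹ = 1 + κ / 4 * (p.1 ^ 2 + p.2.1 ^ 2) := by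
  rw [lam, one_div, inv_inv]

theorem lie_const_left (c : V3) (Y : V3 → V3) (p : V3) :
    lie (fun _ => c) Y p = fderiv ℝ Y p c := by
  simp [lie]

theorem lie_const_right (X : V3 → V3) (c p : V3) : lie X (fun _ => c) p = -fderiv ℝ X p c := by
  simp [lie]

def rotFrame (κ τ σ φ : ℝ) (p : V3) : V3 :=
  ((lam κ p)⁻¹ * cos (σ * p.2.2 + φ),
   (lam κ p)⁻¹ * sin (σ * p.2.2 + φ),
   τ * (p.1 * sin (σ * p.2.2 + φ) - p.2.1 * cos (σ * p.2.2 + φ)))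

theorem rotFrame_add_pi_div_two (κ τ σ φ : ℝ) (p : V3) :
    rotFrame κ τ σ (φ + π / 2) p =
      (-((lam κ p)⁻¹ * sin (σ * p.2.2 + φ)),
       (lam κ p)⁻¹ * cos (σ * p.2.2 + φ),
       τ * (p.1 * cos (σ * p.2.2 + φ) + p.2.1 * sin (σ * p.2.2 + φ))) := by
  simp only [rotFrame, ← add_assoc, cos_add_pi_div_two, sin_add_pi_div_two]
  ext <;> dsimp only <;> ring

theorem E1_eq_rotFrame (κ τ : ℝ) : E1 κ τ = rotFrame κ τ (κ / (2 * τ)) 0 := by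
  funext q
  simp only [E1, rotFrame, add_zero]

theorem E2_eq_rotFrame (κ τ : ℝ) : E2 κ τ = rotFrame κ τ (κ / (2 * τ)) (0 + π / 2) := by
  funext q
  rw [rotFrame_add_pi_div_two, add_zero, E2]

theorem fderiv_rotFrame_apply (κ τ σ φ : ℝ) (p v : V3) :
    fderiv ℝ (rotFrame κ τ σ φ) p v =
      (κ / 2 * (p.1 * v.1 + p.2.1 * v.2.1) * cos (σ * p.2.2 + φ)
          - (lam κ p)⁻¹ * σ * v.2.2 * sin (σ * p.2.2 + φ),
        κ / 2 * (p.1 * v.1 + p.2.1 * v.2.1) * sin (σ * p.2.2 + φ)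
          + (lam κ p)⁻¹ * σ * v.2.2 * cos (σ * p.2.2 + φ),
        τ * (v.1 * sin (σ * p.2.2 + φ) - v.2.1 * cos (σ * p.2.2 + φ)
          + σ * v.2.2 * (p.1 * cos (σ * p.2.2 + φ) + p.2.1 * sin (σ * p.2.2 + φ)))) := by
  have hx : HasFDerivAt (𝕜 := ℝ) (fun q : V3 => q.1) _ p := hasFDerivAt_fst
  have hyz : HasFDerivAt (𝕜 := ℝ) (fun q : V3 => q.2) _ p := hasFDerivAt_snd
  have hy := hyz.fst
  have hθ := (hyz.snd.const_mul σ).add_const φ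
  have hm := (((hx.pow 2).fun_add (hy.pow 2)).const_mul (κ / 4)).const_add 1
  rw [← funext (inv_lam κ)] at hm
  have hF : HasFDerivAt (rotFrame κ τ σ φ) _ p :=
    (hm.fun_mul hθ.cos).prodMk ((hm.fun_mul hθ.sin).prodMk
      (((hx.fun_mul hθ.sin).fun_sub (hy.fun_mul hθ.cos)).const_mul τ))
  rw [hF.fderiv]
  ext <;> simp only [Nat.add_one_sub_one, pow_one, nsmul_eq_mul, Nat.cast_ofNat, smul_add,
    ContinuousLinearMap.prod_apply, add_apply, smul_apply,
    ContinuousLinearMap.comp_apply, ContinuousLinearMap.coe_fst', ContinuousLinearMap.coe_snd',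
    sub_apply, smul_eq_mul] <;> ring

theorem lie_E3_rotFrame (κ τ σ φ : ℝ) (p : V3) :
    lie (fun _ => E3) (rotFrame κ τ σ φ) p = σ • rotFrame κ τ σ (φ + π / 2) p := by
  rw [lie_const_left, fderiv_rotFrame_apply, rotFrame_add_pi_div_two]
  ext <;> simp only [E3, Prod.smul_mk, smul_eq_mul] <;> ring

theorem lie_rotFrame_E3 (κ τ σ φ : ℝ) (p : V3) :
    lie (rotFrame κ τ σ (φ + π / 2)) (fun _ => E3) p = σ • rotFrame κ τ σ φ p := by
  rw [lie_const_right, fderiv_rotFrame_apply]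
  simp only [← add_assoc, cos_add_pi_div_two, sin_add_pi_div_two]
  ext <;> simp only [E3, rotFrame, Prod.smul_mk, Prod.neg_mk, smul_eq_mul] <;> ring

theorem lie_rotFrame_rotFrame {κ τ σ : ℝ} (h : κ = 2 * σ * τ) (φ : ℝ) (p : V3) :
    lie (rotFrame κ τ σ φ) (rotFrame κ τ σ (φ + π / 2)) p = (2 * τ) • E3 := by
  have hθ := sin_sq_add_cos_sq (σ * p.2.2 + φ)
  rw [lie, fderiv_rotFrame_apply, fderiv_rotFrame_apply, rotFrame_add_pi_div_two]
  simp only [rotFrame, ← add_assoc, cos_add_pi_div_two, sin_add_pi_div_two, inv_lam]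
  subst h
  ext <;> simp only [E3, Prod.fst_sub, Prod.snd_sub, Prod.smul_fst, Prod.smul_snd, smul_eq_mul]
  · ring
  · ring
  · linear_combination (2 * τ) * hθ

theorem frame_brackets_general (κ τ : ℝ) (hτ : τ ≠ 0) (p : V3) :
    lie (fun q => E1 κ τ q) (fun q => E2 κ τ q) p = (2 * τ) • E3 ∧
    lie (fun q => E2 κ τ q) (fun _ => E3) p = (κ / (2 * τ)) • E1 κ τ p ∧
    lie (fun _ => E3) (fun q => E1 κ τ q) p = (κ / (2 * τ)) • E2 κ τ p := by
  have hκ : κ = 2 * (κ / (2 * τ)) * τ := by field_simp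
  rw [E1_eq_rotFrame, E2_eq_rotFrame]
  exact ⟨lie_rotFrame_rotFrame hκ 0 p, lie_rotFrame_E3 κ τ _ 0 p, lie_E3_rotFrame κ τ _ 0 p⟩

/-- the Lie bracket relations `[E₁,E₂] = 2τE₃`, `[E₂,E₃] = σE₁`,
`[E₃,E₁] = σE₂`, with `σ = κ/(2τ)`. -/
theorem frame_brackets (κ τ : ℝ) (hτ : τ ≠ 0) (p : V3) (hp : p ∈ Dset κ) :
    lie (fun q => E1 κ τ q) (fun q => E2 κ τ q) p = (2 * τ) • E3 ∧
    lie (fun q => E2 κ τ q) (fun _ => E3) p = (κ / (2 * τ)) • E1 κ τ p ∧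
    lie (fun _ => E3) (fun q => E1 κ τ q) p = (κ / (2 * τ)) • E2 κ τ p :=
  frame_brackets_general κ τ hτ p

end
end

section
/- The explicitly defined connection ∇ᴸ is the Levi-Civita connection of the Lorentzian metric g_L on D: for all smooth vector fields X, Y, Z on D one has ∇ᴸ_X Y − ∇ᴸ_Y X = [X,Y] (Lie bracket of vector fields) and X·(g_L(Y,Z)) = g_L(∇ᴸ_X Y, Z) + g_L(Y, ∇ᴸ_X Z) at every point of D. -/
noncomputable section

open Real

namespace BCV

/-- Denominator `A = 1 + (κ/4)(x²+y²)`. -/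
def Af (κ : ℝ) (q : V3) : ℝ := 1 + κ / 4 * (q.1 ^ 2 + q.2.1 ^ 2)

lemma lam_eq (κ : ℝ) (q : V3) : lam κ q = (Af κ q)⁻¹ := by
  rw [lam, Af, one_div]

lemma lam_inv (κ : ℝ) (q : V3) : (lam κ q)⁻¹ = Af κ q := by
  rw [lam_eq, inv_inv]

/-- explicit frame coefficients -/
def ff1 (κ τ : ℝ) (q u : V3) : ℝ :=
  lam κ q * (Real.cos (κ / (2 * τ) * q.2.2) * u.1 + Real.sin (κ / (2 * τ) * q.2.2) * u.2.1)

def ff2 (κ τ : ℝ) (q u : V3) : ℝ :=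
  lam κ q * (-(Real.sin (κ / (2 * τ) * q.2.2)) * u.1 + Real.cos (κ / (2 * τ) * q.2.2) * u.2.1)

def ff3 (κ τ : ℝ) (q u : V3) : ℝ :=
  u.2.2 + τ * lam κ q * (q.2.1 * u.1 - q.1 * u.2.1)

lemma c3_eq (κ τ : ℝ) (q u : V3) : c3 κ τ q u = ff3 κ τ q u := by
  simp only [c3, gR, E3, ff3]; ring

lemma c1_eq (κ τ : ℝ) (q : V3) (h : Af κ q ≠ 0) (u : V3) : c1 κ τ q u = ff1 κ τ q u := by
  simp only [c1, gR, E1, ff1, lam_eq, lam_inv, inv_inv]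
  field_simp
  ring

lemma c2_eq (κ τ : ℝ) (q : V3) (h : Af κ q ≠ 0) (u : V3) : c2 κ τ q u = ff2 κ τ q u := by
  simp only [c2, gR, E2, ff2, lam_eq, lam_inv, inv_inv]
  field_simp
  ring

end BCV
namespace BCV2
open BCV

lemma gL_frame (κ τ : ℝ) (q u v : V3) :
    gL κ τ q u v = ff1 κ τ q u * ff1 κ τ q v + ff2 κ τ q u * ff2 κ τ q v
      - ff3 κ τ q u * ff3 κ τ q v := by
  have hsc := Real.sin_sq_add_cos_sq (κ / (2 * τ) * q.2.2)
  simp only [gL, ff1, ff2, ff3]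
  set s := Real.sin (κ / (2 * τ) * q.2.2)
  set c := Real.cos (κ / (2 * τ) * q.2.2)
  linear_combination (-((lam κ q) ^ 2 * (u.1 * v.1 + u.2.1 * v.2.1))) * hsc

lemma ff1_lin (κ τ : ℝ) (q : V3) (r1 r2 r3 : ℝ) (u v w : V3) :
    ff1 κ τ q (r1 • u + r2 • v + r3 • w)
      = r1 * ff1 κ τ q u + r2 * ff1 κ τ q v + r3 * ff1 κ τ q w := by
  simp only [ff1, Prod.fst_add, Prod.snd_add, Prod.smul_fst, Prod.smul_snd, smul_eq_mul]
  ring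

lemma ff2_lin (κ τ : ℝ) (q : V3) (r1 r2 r3 : ℝ) (u v w : V3) :
    ff2 κ τ q (r1 • u + r2 • v + r3 • w)
      = r1 * ff2 κ τ q u + r2 * ff2 κ τ q v + r3 * ff2 κ τ q w := by
  simp only [ff2, Prod.fst_add, Prod.snd_add, Prod.smul_fst, Prod.smul_snd, smul_eq_mul]
  ring

lemma ff3_lin (κ τ : ℝ) (q : V3) (r1 r2 r3 : ℝ) (u v w : V3) :
    ff3 κ τ q (r1 • u + r2 • v + r3 • w)
      = r1 * ff3 κ τ q u + r2 * ff3 κ τ q v + r3 * ff3 κ τ q w := by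
  simp only [ff3, Prod.fst_add, Prod.snd_add, Prod.smul_fst, Prod.smul_snd, smul_eq_mul]
  ring

lemma ff1_E1 (κ τ : ℝ) (q : V3) (h : Af κ q ≠ 0) : ff1 κ τ q (E1 κ τ q) = 1 := by
  have hsc := Real.sin_sq_add_cos_sq (κ / (2 * τ) * q.2.2)
  simp only [ff1, E1, lam_eq, lam_inv, inv_inv]
  set s := Real.sin (κ / (2 * τ) * q.2.2)
  set c := Real.cos (κ / (2 * τ) * q.2.2)
  field_simp
  linear_combination hsc

lemma ff1_E2 (κ τ : ℝ) (q : V3) : ff1 κ τ q (E2 κ τ q) = 0 := by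
  simp only [ff1, E2]; ring

lemma ff1_E3 (κ τ : ℝ) (q : V3) : ff1 κ τ q E3 = 0 := by
  simp only [ff1, E3]; ring

lemma ff2_E1 (κ τ : ℝ) (q : V3) : ff2 κ τ q (E1 κ τ q) = 0 := by
  simp only [ff2, E1]; ring

lemma ff2_E2 (κ τ : ℝ) (q : V3) (h : Af κ q ≠ 0) : ff2 κ τ q (E2 κ τ q) = 1 := by
  have hsc := Real.sin_sq_add_cos_sq (κ / (2 * τ) * q.2.2)
  simp only [ff2, E2, lam_eq, lam_inv, inv_inv]
  set s := Real.sin (κ / (2 * τ) * q.2.2)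
  set c := Real.cos (κ / (2 * τ) * q.2.2)
  field_simp
  linear_combination hsc

lemma ff2_E3 (κ τ : ℝ) (q : V3) : ff2 κ τ q E3 = 0 := by
  simp only [ff2, E3]; ring

lemma ff3_E1 (κ τ : ℝ) (q : V3) (h : Af κ q ≠ 0) : ff3 κ τ q (E1 κ τ q) = 0 := by
  simp only [ff3, E1, lam_eq, lam_inv, inv_inv]
  set s := Real.sin (κ / (2 * τ) * q.2.2)
  set c := Real.cos (κ / (2 * τ) * q.2.2)
  field_simp
  ring

lemma ff3_E2 (κ τ : ℝ) (q : V3) (h : Af κ q ≠ 0) : ff3 κ τ q (E2 κ τ q) = 0 := by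
  simp only [ff3, E2, lam_eq, lam_inv, inv_inv]
  set s := Real.sin (κ / (2 * τ) * q.2.2)
  set c := Real.cos (κ / (2 * τ) * q.2.2)
  field_simp
  ring

lemma ff3_E3 (κ τ : ℝ) (q : V3) : ff3 κ τ q E3 = 1 := by
  simp only [ff3, E3]; ring

/-- reconstruction -/
lemma recon (κ τ : ℝ) (q : V3) (h : Af κ q ≠ 0) (u : V3) :
    ff1 κ τ q u • E1 κ τ q + ff2 κ τ q u • E2 κ τ q + ff3 κ τ q u • E3 = u := by
  have hsc := Real.sin_sq_add_cos_sq (κ / (2 * τ) * q.2.2)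
  simp only [ff1, ff2, ff3, E1, E2, E3, lam_eq, lam_inv, inv_inv, Prod.ext_iff,
    Prod.fst_add, Prod.snd_add, Prod.smul_fst, Prod.smul_snd, smul_eq_mul]
  set s := Real.sin (κ / (2 * τ) * q.2.2)
  set c := Real.cos (κ / (2 * τ) * q.2.2)
  refine ⟨?_, ?_, ?_⟩
  · field_simp
    linear_combination (Af κ q * u.1) * hsc
  · field_simp
    linear_combination (Af κ q * u.2.1) * hsc
  · field_simp
    linear_combination (-(τ * (q.2.1 * u.1 - q.1 * u.2.1))) * hsc

/-- gL of a frame combination -/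
lemma gL_combo (κ τ : ℝ) (q : V3) (h : Af κ q ≠ 0) (r1 r2 r3 : ℝ) (v : V3) :
    gL κ τ q (r1 • E1 κ τ q + r2 • E2 κ τ q + r3 • E3) v
      = r1 * ff1 κ τ q v + r2 * ff2 κ τ q v - r3 * ff3 κ τ q v := by
  have h1 : ∀ w : V3, gL κ τ q w v = ff1 κ τ q w * ff1 κ τ q v + ff2 κ τ q w * ff2 κ τ q v
      - ff3 κ τ q w * ff3 κ τ q v := by
    intro w; rw [gL_frame]
  rw [h1, ff1_lin, ff2_lin, ff3_lin, ff1_E1 _ _ _ h, ff1_E2, ff1_E3, ff2_E1,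
    ff2_E2 _ _ _ h, ff2_E3, ff3_E1 _ _ _ h, ff3_E2 _ _ _ h, ff3_E3]
  ring

end BCV2
namespace BCV3
open BCV BCV2

lemma Dset_open (κ : ℝ) : IsOpen (Dset κ) := by
  by_cases hκ : κ < 0
  · have : Dset κ = {q : V3 | q.1 ^ 2 + q.2.1 ^ 2 < -4 / κ} := by
      ext q; simp [Dset, hκ]
    rw [this]
    have hc : Continuous fun q : V3 => q.1 ^ 2 + q.2.1 ^ 2 := by fun_prop
    exact isOpen_lt hc continuous_const
  · have : Dset κ = Set.univ := by
      ext q; simp [Dset, hκ]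
    rw [this]; exact isOpen_univ

lemma Af_pos {κ : ℝ} {q : V3} (hq : q ∈ Dset κ) : 0 < Af κ q := by
  rw [Af]
  by_cases hκ : κ < 0
  · have h1 := hq hκ
    have h2 : q.1 ^ 2 + q.2.1 ^ 2 ≥ 0 := by positivity
    have h3 : κ / 4 * (q.1 ^ 2 + q.2.1 ^ 2) > κ / 4 * (-4 / κ) := by
      apply mul_lt_mul_of_neg_left h1; linarith
    have hκ0 : κ ≠ 0 := ne_of_lt hκ
    have h4 : κ / 4 * (-4 / κ) = -1 := by field_simp
    linarith
  · push_neg at hκ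
    have h2 : q.1 ^ 2 + q.2.1 ^ 2 ≥ 0 := by positivity
    nlinarith

lemma lam_fun (κ : ℝ) : lam κ = fun q => (Af κ q)⁻¹ := funext (lam_eq κ)

lemma Af_diff (κ : ℝ) : Differentiable ℝ (Af κ) := by
  unfold Af; fun_prop

lemma lam_diffAt {κ : ℝ} {p : V3} (h : Af κ p ≠ 0) : DifferentiableAt ℝ (lam κ) p := by
  rw [lam_fun]; exact ((Af_diff κ) p).inv h

lemma ff1_diffAt {κ τ : ℝ} {p : V3} (h : Af κ p ≠ 0) {W : V3 → V3}
    (hW : DifferentiableAt ℝ W p) :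
    DifferentiableAt ℝ (fun q => ff1 κ τ q (W q)) p := by
  unfold ff1
  apply (lam_diffAt h).mul
  apply DifferentiableAt.add
  · exact (Real.differentiable_cos.differentiableAt.comp p (by fun_prop)).mul hW.fst
  · exact (Real.differentiable_sin.differentiableAt.comp p (by fun_prop)).mul hW.snd.fst

lemma ff2_diffAt {κ τ : ℝ} {p : V3} (h : Af κ p ≠ 0) {W : V3 → V3}
    (hW : DifferentiableAt ℝ W p) :
    DifferentiableAt ℝ (fun q => ff2 κ τ q (W q)) p := by
  unfold ff2
  apply (lam_diffAt h).mul
  apply DifferentiableAt.add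
  · exact ((Real.differentiable_sin.differentiableAt.comp p (by fun_prop)).neg).mul hW.fst
  · exact (Real.differentiable_cos.differentiableAt.comp p (by fun_prop)).mul hW.snd.fst

lemma ff3_diffAt {κ τ : ℝ} {p : V3} (h : Af κ p ≠ 0) {W : V3 → V3}
    (hW : DifferentiableAt ℝ W p) :
    DifferentiableAt ℝ (fun q => ff3 κ τ q (W q)) p := by
  unfold ff3
  apply hW.snd.snd.add
  apply (differentiableAt_const τ |>.mul (lam_diffAt h)).mul
  exact (differentiableAt_snd.fst.mul hW.fst).sub (differentiableAt_fst.mul hW.snd.fst)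

end BCV3
namespace BCV4
open BCV BCV2 BCV3

lemma E1_fun (κ τ : ℝ) : E1 κ τ = fun q : V3 =>
    (Af κ q * Real.cos (κ / (2 * τ) * q.2.2),
     Af κ q * Real.sin (κ / (2 * τ) * q.2.2),
     τ * (q.1 * Real.sin (κ / (2 * τ) * q.2.2) - q.2.1 * Real.cos (κ / (2 * τ) * q.2.2))) :=
  funext fun q => by rw [E1, lam_inv]

lemma E2_fun (κ τ : ℝ) : E2 κ τ = fun q : V3 =>
    (-(Af κ q * Real.sin (κ / (2 * τ) * q.2.2)),
     Af κ q * Real.cos (κ / (2 * τ) * q.2.2),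
     τ * (q.1 * Real.cos (κ / (2 * τ) * q.2.2) + q.2.1 * Real.sin (κ / (2 * τ) * q.2.2))) :=
  funext fun q => by rw [E2, lam_inv]

set_option maxHeartbeats 1000000 in
lemma frame_deriv (κ τ : ℝ) (hτ : τ ≠ 0) (p : V3) :
    ∃ D1 D2 : V3 →L[ℝ] V3, HasFDerivAt (E1 κ τ) D1 p ∧ HasFDerivAt (E2 κ τ) D2 p ∧
      D1 E3 = (κ / (2 * τ)) • E2 κ τ p ∧
      D2 E3 = -((κ / (2 * τ)) • E1 κ τ p) ∧
      D2 (E1 κ τ p) - D1 (E2 κ τ p) = (2 * τ) • (E3 : V3) := by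
  have hx : HasFDerivAt (fun q : V3 => q.1) (ContinuousLinearMap.fst ℝ ℝ (ℝ × ℝ)) p :=
    hasFDerivAt_fst
  have hy : HasFDerivAt (fun q : V3 => q.2.1)
      ((ContinuousLinearMap.fst ℝ ℝ ℝ).comp (ContinuousLinearMap.snd ℝ ℝ (ℝ × ℝ))) p :=
    hasFDerivAt_fst.comp p hasFDerivAt_snd
  have hz : HasFDerivAt (fun q : V3 => q.2.2)
      ((ContinuousLinearMap.snd ℝ ℝ ℝ).comp (ContinuousLinearMap.snd ℝ ℝ (ℝ × ℝ))) p :=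
    hasFDerivAt_snd.comp p hasFDerivAt_snd
  have hθ : HasFDerivAt (fun q : V3 => κ / (2 * τ) * q.2.2)
      ((κ / (2 * τ)) • ((ContinuousLinearMap.snd ℝ ℝ ℝ).comp
        (ContinuousLinearMap.snd ℝ ℝ (ℝ × ℝ)))) p := hz.const_mul _
  have hcos := hθ.cos
  have hsin := hθ.sin
  have hAfe : Af κ = fun q : V3 => 1 + κ / 4 * (q.1 * q.1 + q.2.1 * q.2.1) := by
    funext q; rw [Af]; ring
  have hAf : HasFDerivAt (Af κ)
      ((κ / 4) • ((p.1 • ContinuousLinearMap.fst ℝ ℝ (ℝ × ℝ) +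
          p.1 • ContinuousLinearMap.fst ℝ ℝ (ℝ × ℝ)) +
        (p.2.1 • ((ContinuousLinearMap.fst ℝ ℝ ℝ).comp (ContinuousLinearMap.snd ℝ ℝ (ℝ × ℝ))) +
         p.2.1 • ((ContinuousLinearMap.fst ℝ ℝ ℝ).comp
           (ContinuousLinearMap.snd ℝ ℝ (ℝ × ℝ)))))) p := by
    rw [hAfe]
    exact (((hx.mul hx).add (hy.mul hy)).const_mul (κ / 4)).const_add 1
  have hE1 := (hAf.mul hcos).prodMk ((hAf.mul hsin).prodMk
      (((hx.mul hsin).sub (hy.mul hcos)).const_mul τ))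
  have hE2 := ((hAf.mul hsin).neg).prodMk ((hAf.mul hcos).prodMk
      (((hx.mul hcos).add (hy.mul hsin)).const_mul τ))
  simp only [Pi.mul_apply, Pi.sub_apply, Pi.add_apply, Pi.neg_apply] at hE1 hE2
  rw [← E1_fun κ τ] at hE1
  rw [← E2_fun κ τ] at hE2
  refine ⟨_, _, hE1, hE2, ?_, ?_, ?_⟩
  · have hsc := Real.sin_sq_add_cos_sq (κ / (2 * τ) * p.2.2)
    simp only [E2, E3, lam_inv, ContinuousLinearMap.prod_apply, ContinuousLinearMap.add_apply,
      ContinuousLinearMap.smul_apply, ContinuousLinearMap.coe_comp', Function.comp_apply,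
      ContinuousLinearMap.coe_fst', ContinuousLinearMap.coe_snd', smul_eq_mul,
      ContinuousLinearMap.sub_apply, ContinuousLinearMap.neg_apply, Prod.ext_iff,
      Prod.smul_fst, Prod.smul_snd, Prod.fst_add, Prod.snd_add, Prod.mk.injEq]
    set s := Real.sin (κ / (2 * τ) * p.2.2)
    set c := Real.cos (κ / (2 * τ) * p.2.2)
    refine ⟨?_, ?_, ?_⟩ <;> field_simp <;> ring
  · have hsc := Real.sin_sq_add_cos_sq (κ / (2 * τ) * p.2.2)
    simp only [E1, E3, lam_inv, ContinuousLinearMap.prod_apply, ContinuousLinearMap.add_apply,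
      ContinuousLinearMap.smul_apply, ContinuousLinearMap.coe_comp', Function.comp_apply,
      ContinuousLinearMap.coe_fst', ContinuousLinearMap.coe_snd', smul_eq_mul,
      ContinuousLinearMap.sub_apply, ContinuousLinearMap.neg_apply, Prod.ext_iff,
      Prod.smul_fst, Prod.smul_snd, Prod.fst_add, Prod.snd_add, Prod.mk.injEq,
      Prod.fst_neg, Prod.snd_neg]
    set s := Real.sin (κ / (2 * τ) * p.2.2)
    set c := Real.cos (κ / (2 * τ) * p.2.2)
    refine ⟨?_, ?_, ?_⟩ <;> field_simp <;> ring
  · have hsc := Real.sin_sq_add_cos_sq (κ / (2 * τ) * p.2.2)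
    simp only [E1, E2, E3, lam_inv, ContinuousLinearMap.prod_apply,
      ContinuousLinearMap.add_apply,
      ContinuousLinearMap.smul_apply, ContinuousLinearMap.coe_comp', Function.comp_apply,
      ContinuousLinearMap.coe_fst', ContinuousLinearMap.coe_snd', smul_eq_mul,
      ContinuousLinearMap.sub_apply, ContinuousLinearMap.neg_apply, Prod.ext_iff,
      Prod.smul_fst, Prod.smul_snd, Prod.fst_add, Prod.snd_add, Prod.mk.injEq,
      Prod.fst_neg, Prod.snd_neg, Prod.fst_sub, Prod.snd_sub]
    set s := Real.sin (κ / (2 * τ) * p.2.2)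
    set c := Real.cos (κ / (2 * τ) * p.2.2)
    refine ⟨?_, ?_, ?_⟩
    · field_simp
      ring
    · field_simp
      ring
    · simp only [hAfe]
      field_simp
      linear_combination 16 * hsc
end BCV4

open BCV BCV2 BCV3 BCV4 Filter Topology in
set_option maxHeartbeats 2000000 in
/-- `∇ᴸ` is the Levi-Civita connection of `g_L` on `D`:
torsion-freeness and metric compatibility. -/
theorem nablaL_leviCivita (κ τ : ℝ) (hτ : τ ≠ 0) (X Y Z : V3 → V3)
    (hX : ContDiffOn ℝ (⊤ : ℕ∞) X (Dset κ)) (hY : ContDiffOn ℝ (⊤ : ℕ∞) Y (Dset κ))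
    (hZ : ContDiffOn ℝ (⊤ : ℕ∞) Z (Dset κ)) (p : V3) (hp : p ∈ Dset κ) :
    nablaL κ τ X Y p - nablaL κ τ Y X p = lie X Y p ∧
    fderiv ℝ (fun q => gL κ τ q (Y q) (Z q)) p (X p) =
      gL κ τ p (nablaL κ τ X Y p) (Z p) + gL κ τ p (Y p) (nablaL κ τ X Z p) := by
  have hnh : Dset κ ∈ 𝓝 p := (Dset_open κ).mem_nhds hp
  have hA : Af κ p ≠ 0 := ne_of_gt (Af_pos hp)
  have hXd : DifferentiableAt ℝ X p := (hX.differentiableOn (by simp)).differentiableAt hnh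
  have hYd : DifferentiableAt ℝ Y p := (hY.differentiableOn (by simp)).differentiableAt hnh
  have hZd : DifferentiableAt ℝ Z p := (hZ.differentiableOn (by simp)).differentiableAt hnh
  obtain ⟨D1, D2, hE1, hE2, hM13, hM23, hBr⟩ := frame_deriv κ τ hτ p
  have hM21 : D2 (E1 κ τ p) = D1 (E2 κ τ p) + (2 * τ) • (E3 : V3) := by
    rw [← hBr]; abel
  -- differentiability of coefficient functions
  have hdY1 : DifferentiableAt ℝ (fun q => ff1 κ τ q (Y q)) p := ff1_diffAt hA hYd
  have hdY2 : DifferentiableAt ℝ (fun q => ff2 κ τ q (Y q)) p := ff2_diffAt hA hYd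
  have hdY3 : DifferentiableAt ℝ (fun q => ff3 κ τ q (Y q)) p := ff3_diffAt hA hYd
  have hdX1 : DifferentiableAt ℝ (fun q => ff1 κ τ q (X q)) p := ff1_diffAt hA hXd
  have hdX2 : DifferentiableAt ℝ (fun q => ff2 κ τ q (X q)) p := ff2_diffAt hA hXd
  have hdX3 : DifferentiableAt ℝ (fun q => ff3 κ τ q (X q)) p := ff3_diffAt hA hXd
  have hdZ1 : DifferentiableAt ℝ (fun q => ff1 κ τ q (Z q)) p := ff1_diffAt hA hZd
  have hdZ2 : DifferentiableAt ℝ (fun q => ff2 κ τ q (Z q)) p := ff2_diffAt hA hZd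
  have hdZ3 : DifferentiableAt ℝ (fun q => ff3 κ τ q (Z q)) p := ff3_diffAt hA hZd
  -- replace the `c`-coefficients by the `ff`-coefficients in the fderiv's
  have hfY1 : fderiv ℝ (fun q => c1 κ τ q (Y q)) p = fderiv ℝ (fun q => ff1 κ τ q (Y q)) p := by
    apply Filter.EventuallyEq.fderiv_eq
    filter_upwards [hnh] with q hq
    exact c1_eq κ τ q (ne_of_gt (Af_pos hq)) (Y q)
  have hfY2 : fderiv ℝ (fun q => c2 κ τ q (Y q)) p = fderiv ℝ (fun q => ff2 κ τ q (Y q)) p := by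
    apply Filter.EventuallyEq.fderiv_eq
    filter_upwards [hnh] with q hq
    exact c2_eq κ τ q (ne_of_gt (Af_pos hq)) (Y q)
  have hfY3 : fderiv ℝ (fun q => c3 κ τ q (Y q)) p = fderiv ℝ (fun q => ff3 κ τ q (Y q)) p := by
    apply Filter.EventuallyEq.fderiv_eq
    filter_upwards [hnh] with q hq
    exact c3_eq κ τ q (Y q)
  have hfX1 : fderiv ℝ (fun q => c1 κ τ q (X q)) p = fderiv ℝ (fun q => ff1 κ τ q (X q)) p := by
    apply Filter.EventuallyEq.fderiv_eq
    filter_upwards [hnh] with q hq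
    exact c1_eq κ τ q (ne_of_gt (Af_pos hq)) (X q)
  have hfX2 : fderiv ℝ (fun q => c2 κ τ q (X q)) p = fderiv ℝ (fun q => ff2 κ τ q (X q)) p := by
    apply Filter.EventuallyEq.fderiv_eq
    filter_upwards [hnh] with q hq
    exact c2_eq κ τ q (ne_of_gt (Af_pos hq)) (X q)
  have hfX3 : fderiv ℝ (fun q => c3 κ τ q (X q)) p = fderiv ℝ (fun q => ff3 κ τ q (X q)) p := by
    apply Filter.EventuallyEq.fderiv_eq
    filter_upwards [hnh] with q hq
    exact c3_eq κ τ q (X q)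
  have hfZ1 : fderiv ℝ (fun q => c1 κ τ q (Z q)) p = fderiv ℝ (fun q => ff1 κ τ q (Z q)) p := by
    apply Filter.EventuallyEq.fderiv_eq
    filter_upwards [hnh] with q hq
    exact c1_eq κ τ q (ne_of_gt (Af_pos hq)) (Z q)
  have hfZ2 : fderiv ℝ (fun q => c2 κ τ q (Z q)) p = fderiv ℝ (fun q => ff2 κ τ q (Z q)) p := by
    apply Filter.EventuallyEq.fderiv_eq
    filter_upwards [hnh] with q hq
    exact c2_eq κ τ q (ne_of_gt (Af_pos hq)) (Z q)
  have hfZ3 : fderiv ℝ (fun q => c3 κ τ q (Z q)) p = fderiv ℝ (fun q => ff3 κ τ q (Z q)) p := by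
    apply Filter.EventuallyEq.fderiv_eq
    filter_upwards [hnh] with q hq
    exact c3_eq κ τ q (Z q)
  -- values at `p`
  have hc1X : c1 κ τ p (X p) = ff1 κ τ p (X p) := c1_eq κ τ p hA (X p)
  have hc2X : c2 κ τ p (X p) = ff2 κ τ p (X p) := c2_eq κ τ p hA (X p)
  have hc3X : c3 κ τ p (X p) = ff3 κ τ p (X p) := c3_eq κ τ p (X p)
  have hc1Y : c1 κ τ p (Y p) = ff1 κ τ p (Y p) := c1_eq κ τ p hA (Y p)
  have hc2Y : c2 κ τ p (Y p) = ff2 κ τ p (Y p) := c2_eq κ τ p hA (Y p)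
  have hc3Y : c3 κ τ p (Y p) = ff3 κ τ p (Y p) := c3_eq κ τ p (Y p)
  have hc1Z : c1 κ τ p (Z p) = ff1 κ τ p (Z p) := c1_eq κ τ p hA (Z p)
  have hc2Z : c2 κ τ p (Z p) = ff2 κ τ p (Z p) := c2_eq κ τ p hA (Z p)
  have hc3Z : c3 κ τ p (Z p) = ff3 κ τ p (Z p) := c3_eq κ τ p (Z p)
  -- pointwise reconstruction
  have hXp : X p = ff1 κ τ p (X p) • E1 κ τ p + ff2 κ τ p (X p) • E2 κ τ p
      + ff3 κ τ p (X p) • (E3 : V3) := (recon κ τ p hA (X p)).symm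
  have hYp : Y p = ff1 κ τ p (Y p) • E1 κ τ p + ff2 κ τ p (Y p) • E2 κ τ p
      + ff3 κ τ p (Y p) • (E3 : V3) := (recon κ τ p hA (Y p)).symm
  -- derivatives of X and Y via the frame
  have hYrec : Y =ᶠ[𝓝 p] (fun q => (fun q => ff1 κ τ q (Y q)) q • E1 κ τ q
      + (fun q => ff2 κ τ q (Y q)) q • E2 κ τ q + (fun q => ff3 κ τ q (Y q)) q • (E3 : V3)) := by
    filter_upwards [hnh] with q hq
    exact (recon κ τ q (ne_of_gt (Af_pos hq)) (Y q)).symm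
  have hXrec : X =ᶠ[𝓝 p] (fun q => (fun q => ff1 κ τ q (X q)) q • E1 κ τ q
      + (fun q => ff2 κ τ q (X q)) q • E2 κ τ q + (fun q => ff3 κ τ q (X q)) q • (E3 : V3)) := by
    filter_upwards [hnh] with q hq
    exact (recon κ τ q (ne_of_gt (Af_pos hq)) (X q)).symm
  have hYder : HasFDerivAt Y
      ((((fun q => ff1 κ τ q (Y q)) p • D1 + (fderiv ℝ (fun q => ff1 κ τ q (Y q)) p).smulRight (E1 κ τ p))
        + ((fun q => ff2 κ τ q (Y q)) p • D2 + (fderiv ℝ (fun q => ff2 κ τ q (Y q)) p).smulRight (E2 κ τ p)))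
        + ((fun q => ff3 κ τ q (Y q)) p • (0 : V3 →L[ℝ] V3) + (fderiv ℝ (fun q => ff3 κ τ q (Y q)) p).smulRight (E3 : V3))) p := by
    refine HasFDerivAt.congr_of_eventuallyEq ?_ hYrec
    exact ((hdY1.hasFDerivAt.smul hE1).add (hdY2.hasFDerivAt.smul hE2)).add
      (hdY3.hasFDerivAt.smul (hasFDerivAt_const (E3 : V3) p))
  have hXder : HasFDerivAt X
      ((((fun q => ff1 κ τ q (X q)) p • D1 + (fderiv ℝ (fun q => ff1 κ τ q (X q)) p).smulRight (E1 κ τ p))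
        + ((fun q => ff2 κ τ q (X q)) p • D2 + (fderiv ℝ (fun q => ff2 κ τ q (X q)) p).smulRight (E2 κ τ p)))
        + ((fun q => ff3 κ τ q (X q)) p • (0 : V3 →L[ℝ] V3) + (fderiv ℝ (fun q => ff3 κ τ q (X q)) p).smulRight (E3 : V3))) p := by
    refine HasFDerivAt.congr_of_eventuallyEq ?_ hXrec
    exact ((hdX1.hasFDerivAt.smul hE1).add (hdX2.hasFDerivAt.smul hE2)).add
      (hdX3.hasFDerivAt.smul (hasFDerivAt_const (E3 : V3) p))
  -- expansions of the frame derivatives at X p, Y p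
  have hD1X : D1 (X p) = ff1 κ τ p (X p) • D1 (E1 κ τ p) + ff2 κ τ p (X p) • D1 (E2 κ τ p)
      + ff3 κ τ p (X p) • D1 (E3 : V3) := by
    conv_lhs => rw [hXp]
    simp only [map_add, map_smul]
  have hD2X : D2 (X p) = ff1 κ τ p (X p) • D2 (E1 κ τ p) + ff2 κ τ p (X p) • D2 (E2 κ τ p)
      + ff3 κ τ p (X p) • D2 (E3 : V3) := by
    conv_lhs => rw [hXp]
    simp only [map_add, map_smul]
  have hD1Y : D1 (Y p) = ff1 κ τ p (Y p) • D1 (E1 κ τ p) + ff2 κ τ p (Y p) • D1 (E2 κ τ p)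
      + ff3 κ τ p (Y p) • D1 (E3 : V3) := by
    conv_lhs => rw [hYp]
    simp only [map_add, map_smul]
  have hD2Y : D2 (Y p) = ff1 κ τ p (Y p) • D2 (E1 κ τ p) + ff2 κ τ p (Y p) • D2 (E2 κ τ p)
      + ff3 κ τ p (Y p) • D2 (E3 : V3) := by
    conv_lhs => rw [hYp]
    simp only [map_add, map_smul]
  constructor
  · -- torsion-freeness
    rw [lie, hYder.fderiv, hXder.fderiv]
    simp only [nablaL, hfY1, hfY2, hfY3, hfX1, hfX2, hfX3, hc1X, hc2X, hc3X, hc1Y, hc2Y, hc3Y,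
      ContinuousLinearMap.add_apply, ContinuousLinearMap.smul_apply,
      ContinuousLinearMap.smulRight_apply, ContinuousLinearMap.zero_apply, smul_zero]
    rw [hD1X, hD2X, hD1Y, hD2Y, hM13, hM23, hM21]
    match_scalars <;> field_simp <;> ring
  · -- metric compatibility
    have hgLfun : (fun q => gL κ τ q (Y q) (Z q))
        = (fun q => ff1 κ τ q (Y q)) * (fun q => ff1 κ τ q (Z q))
          + (fun q => ff2 κ τ q (Y q)) * (fun q => ff2 κ τ q (Z q))
          - (fun q => ff3 κ τ q (Y q)) * (fun q => ff3 κ τ q (Z q)) :=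
      funext fun q => gL_frame κ τ q (Y q) (Z q)
    rw [hgLfun,
      (((hdY1.hasFDerivAt.mul hdZ1.hasFDerivAt).add (hdY2.hasFDerivAt.mul hdZ2.hasFDerivAt)).sub
        (hdY3.hasFDerivAt.mul hdZ3.hasFDerivAt)).fderiv]
    have hnXY : nablaL κ τ X Y p =
        (fderiv ℝ (fun q => ff1 κ τ q (Y q)) p (X p) - τ * ff2 κ τ p (X p) * ff3 κ τ p (Y p)
          - (κ + 2 * τ ^ 2) / (2 * τ) * (ff3 κ τ p (X p) * ff2 κ τ p (Y p))) • E1 κ τ p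
        + (fderiv ℝ (fun q => ff2 κ τ q (Y q)) p (X p) + τ * ff1 κ τ p (X p) * ff3 κ τ p (Y p)
          + (κ + 2 * τ ^ 2) / (2 * τ) * (ff3 κ τ p (X p) * ff1 κ τ p (Y p))) • E2 κ τ p
        + (fderiv ℝ (fun q => ff3 κ τ q (Y q)) p (X p)
          + τ * (ff1 κ τ p (X p) * ff2 κ τ p (Y p) - ff2 κ τ p (X p) * ff1 κ τ p (Y p))) • (E3 : V3) := by
      rw [nablaL, hfY1, hfY2, hfY3, hc1X, hc2X, hc3X, hc1Y, hc2Y, hc3Y]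
      module
    have hnXZ : nablaL κ τ X Z p =
        (fderiv ℝ (fun q => ff1 κ τ q (Z q)) p (X p) - τ * ff2 κ τ p (X p) * ff3 κ τ p (Z p)
          - (κ + 2 * τ ^ 2) / (2 * τ) * (ff3 κ τ p (X p) * ff2 κ τ p (Z p))) • E1 κ τ p
        + (fderiv ℝ (fun q => ff2 κ τ q (Z q)) p (X p) + τ * ff1 κ τ p (X p) * ff3 κ τ p (Z p)
          + (κ + 2 * τ ^ 2) / (2 * τ) * (ff3 κ τ p (X p) * ff1 κ τ p (Z p))) • E2 κ τ p
        + (fderiv ℝ (fun q => ff3 κ τ q (Z q)) p (X p)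
          + τ * (ff1 κ τ p (X p) * ff2 κ τ p (Z p) - ff2 κ τ p (X p) * ff1 κ τ p (Z p))) • (E3 : V3) := by
      rw [nablaL, hfZ1, hfZ2, hfZ3, hc1X, hc2X, hc3X, hc1Z, hc2Z, hc3Z]
      module
    have hsymm : gL κ τ p (Y p) (nablaL κ τ X Z p) = gL κ τ p (nablaL κ τ X Z p) (Y p) := by
      rw [gL]; rw [gL]; ring
    rw [hsymm, hnXY, hnXZ, gL_combo κ τ p hA, gL_combo κ τ p hA]
    simp only [ContinuousLinearMap.add_apply, ContinuousLinearMap.sub_apply,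
      ContinuousLinearMap.smul_apply, smul_eq_mul]
    field_simp
    ring

end
end

section
/- (Lemma 1.2) For all smooth vector fields X, Y on D, the difference of the two Levi-Civita connections is ∇ᴿ_Y X − ∇ᴸ_Y X = 2τ (X^h ∧_R Y^v − X^v ∧_R Y^h), where X^v = g_R(X,E₃)E₃ and X^h = X − X^v denote the vertical and horizontal parts (and similarly for Y); moreover the same expression holds with ∧_L in place of ∧_R. -/
noncomputable section

open Real

lemma gR_sub_smul (κ τ : ℝ) (p u v w : V3) (r : ℝ) :
    gR κ τ p (u - r • v) w = gR κ τ p u w - r * gR κ τ p v w := by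
  simp only [gR, Prod.fst_sub, Prod.snd_sub, Prod.smul_fst, Prod.smul_snd, smul_eq_mul]
  ring

lemma gR_smul (κ τ : ℝ) (p v w : V3) (r : ℝ) :
    gR κ τ p (r • v) w = r * gR κ τ p v w := by
  simp only [gR, Prod.smul_fst, Prod.smul_snd, smul_eq_mul]
  ring

lemma gR_E3_E1 (κ τ : ℝ) (p : V3) (hd : 1 + κ / 4 * (p.1 ^ 2 + p.2.1 ^ 2) ≠ 0) :
    gR κ τ p E3 (E1 κ τ p) = 0 := by
  have hl : lam κ p ≠ 0 := by rw [lam]; exact one_div_ne_zero hd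
  simp only [gR, E3, E1]
  field_simp
  ring

lemma gR_E3_E2 (κ τ : ℝ) (p : V3) (hd : 1 + κ / 4 * (p.1 ^ 2 + p.2.1 ^ 2) ≠ 0) :
    gR κ τ p E3 (E2 κ τ p) = 0 := by
  have hl : lam κ p ≠ 0 := by rw [lam]; exact one_div_ne_zero hd
  simp only [gR, E3, E2]
  field_simp
  ring

lemma gR_E3_E3 (κ τ : ℝ) (p : V3) : gR κ τ p E3 E3 = 1 := by
  simp [gR, E3]

/-- Lemma 1.2: the difference of the two Levi-Civita connections,
`∇ᴿ_Y X − ∇ᴸ_Y X = 2τ (X^h ∧ Y^v − X^v ∧ Y^h)`, for both cross products. -/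
theorem lemma_1_2 (κ τ : ℝ) (hτ : τ ≠ 0) (X Y : V3 → V3)
    (hX : ContDiffOn ℝ (⊤ : ℕ∞) X (Dset κ)) (hY : ContDiffOn ℝ (⊤ : ℕ∞) Y (Dset κ))
    (p : V3) (hp : p ∈ Dset κ) :
    nablaR κ τ Y X p - nablaL κ τ Y X p =
      (2 * τ) • (wedgeR κ τ p (X p - gR κ τ p (X p) E3 • E3) (gR κ τ p (Y p) E3 • E3)
        - wedgeR κ τ p (gR κ τ p (X p) E3 • E3) (Y p - gR κ τ p (Y p) E3 • E3)) ∧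
    nablaR κ τ Y X p - nablaL κ τ Y X p =
      (2 * τ) • (wedgeL κ τ p (X p - gR κ τ p (X p) E3 • E3) (gR κ τ p (Y p) E3 • E3)
        - wedgeL κ τ p (gR κ τ p (X p) E3 • E3) (Y p - gR κ τ p (Y p) E3 • E3)) := by
  have hd : 1 + κ / 4 * (p.1 ^ 2 + p.2.1 ^ 2) ≠ 0 := by
    rcases lt_or_ge κ 0 with hκ | hκ
    · have h2 := hp hκ
      have h3 : κ * (p.1 ^ 2 + p.2.1 ^ 2) > κ * (-4 / κ) :=
        mul_lt_mul_of_neg_left h2 hκ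
      have h4 : κ * (-4 / κ) = -4 := by
        field_simp
        rw [div_self hκ.ne]
      nlinarith
    · nlinarith [sq_nonneg p.1, sq_nonneg p.2.1]
  have h31 := gR_E3_E1 κ τ p hd
  have h32 := gR_E3_E2 κ τ p hd
  have h33 := gR_E3_E3 κ τ p
  constructor <;>
  · simp only [nablaR, nablaL, wedgeR, wedgeL, c1, c2, c3,
      gR_sub_smul, gR_smul, h31, h32, h33]
    match_scalars <;> field_simp <;> ring

end
end

section
/- (Proposition 2.1, pointwise form) With ε, p, N_L, ω_L and N_R as in the context: (i) ω_L ≥ 1 (in particular ω_L > 0, so N_R is well defined); (ii) g_R(N_R, N_R) = 1; (iii) g_R(N_R, ξ) ≥ 0; and (iv) for every v ∈ ℝ³ with g_L(N_L, v) = 0 one has g_R(N_R, v) = 0. Thus N_R is the unique g_R-unit normal to the g_L-orthogonal complement of N_L having nonnegative g_R-product with ξ. -/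
noncomputable section

open Real

/-! The identity `g_R = g_L + 2 θ ⊗ θ` with `θ = g_R(·, ξ) = -g_L(·, ξ)` makes the `g_R`-reflection
`ρ u = 2 g_R(u, ξ) ξ - u` in the axis `ℝ ξ` turn `g_R` into `-g_L`: `g_R(ρ u, v) = -g_L(u, v)`.
Under the sign condition `g_L(N_L, ξ) ≤ 0` the square root in `N_R` equals `2 g_R(N_L, ξ)`, so
`N_R = ω_L⁻¹ ρ N_L`, and all four claims reduce to this identity and `ω_L² = ε + 2 g_L(N_L, ξ)²`;
this is `≥ 1` because `g_L(u, u) + g_L(u, ξ)²` is the horizontal part `λ² (u₁² + u₂²) ≥ 0`. -/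

def reflXi (κ τ : ℝ) (p u : V3) : V3 := (2 * gR κ τ p u xi) • xi - u

section

variable {κ τ : ℝ} {p : V3}

lemma gR_xi_eq_neg_gL_xi (u : V3) : gR κ τ p u xi = -gL κ τ p u xi := by
  simp only [gR, gL, xi, E3]; ring

lemma gR_smul_left (c : ℝ) (u v : V3) : gR κ τ p (c • u) v = c * gR κ τ p u v := by
  simp only [gR, Prod.smul_fst, Prod.smul_snd, smul_eq_mul]; ring

lemma gR_comm (u v : V3) : gR κ τ p u v = gR κ τ p v u := by
  simp only [gR]; ring

lemma gR_reflXi_left (u v : V3) : gR κ τ p (reflXi κ τ p u) v = -gL κ τ p u v := by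
  simp only [reflXi, gR, gL, xi, E3, Prod.smul_fst, Prod.smul_snd, Prod.fst_sub, Prod.snd_sub,
    smul_eq_mul]
  ring

lemma gR_reflXi_self (u : V3) :
    gR κ τ p (reflXi κ τ p u) (reflXi κ τ p u) = gL κ τ p u u + 2 * gL κ τ p u xi ^ 2 := by
  rw [gR_reflXi_left]
  simp only [reflXi, gR, gL, xi, E3, Prod.smul_fst, Prod.smul_snd, Prod.fst_sub, Prod.snd_sub,
    smul_eq_mul]
  ring

lemma gL_self_add_sq_gL_xi_nonneg (u : V3) : 0 ≤ gL κ τ p u u + gL κ τ p u xi ^ 2 := by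
  have h : gL κ τ p u u + gL κ τ p u xi ^ 2 = (lam κ p * u.1) ^ 2 + (lam κ p * u.2.1) ^ 2 := by
    simp only [gL, xi, E3]; ring
  rw [h]; positivity

lemma one_le_eps_add_two_mul_sq_gL_xi {ε : ℝ} (hε : ε = -1 ∨ ε = 1) {N : V3}
    (hN : gL κ τ p N N = ε) : 1 ≤ ε + 2 * gL κ τ p N xi ^ 2 := by
  have h := gL_self_add_sq_gL_xi_nonneg (κ := κ) (τ := τ) (p := p) N
  rcases hε with rfl | rfl <;> nlinarith [sq_nonneg (gL κ τ p N xi)]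

lemma sq_omegaL {ε : ℝ} {N : V3} (h : 0 ≤ ε + 2 * gL κ τ p N xi ^ 2) :
    omegaL κ τ ε p N ^ 2 = ε + 2 * gL κ τ p N xi ^ 2 :=
  Real.sq_sqrt h

lemma NRof_eq_smul_reflXi {ε : ℝ} {N : V3} (h : 0 ≤ ε + 2 * gL κ τ p N xi ^ 2)
    (hle : gL κ τ p N xi ≤ 0) :
    NRof κ τ ε p N = (1 / omegaL κ τ ε p N) • reflXi κ τ p N := by
  have hsqrt : √(2 * (omegaL κ τ ε p N ^ 2 - ε)) = 2 * gR κ τ p N xi := by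
    rw [sq_omegaL h, gR_xi_eq_neg_gL_xi, ← Real.sqrt_sq (by linarith : 0 ≤ 2 * -gL κ τ p N xi)]
    ring_nf
  rw [NRof, hsqrt, reflXi]

end

theorem prop_2_1_general (κ τ : ℝ) (ε : ℝ) (hε : ε = -1 ∨ ε = 1)
    (p : V3) (NL : V3)
    (hNL : gL κ τ p NL NL = ε) (hle : gL κ τ p NL xi ≤ 0) :
    1 ≤ omegaL κ τ ε p NL ∧
    gR κ τ p (NRof κ τ ε p NL) (NRof κ τ ε p NL) = 1 ∧
    0 ≤ gR κ τ p (NRof κ τ ε p NL) xi ∧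
    ∀ v : V3, gL κ τ p NL v = 0 → gR κ τ p (NRof κ τ ε p NL) v = 0 := by
  have h1 := one_le_eps_add_two_mul_sq_gL_xi hε hNL
  have hω : 1 ≤ omegaL κ τ ε p NL := Real.one_le_sqrt.mpr h1
  have hωsq := sq_omegaL (by linarith : 0 ≤ ε + 2 * gL κ τ p NL xi ^ 2)
  rw [NRof_eq_smul_reflXi (by linarith) hle]
  refine ⟨hω, ?_, ?_, fun v hv => ?_⟩
  · rw [gR_smul_left, gR_comm, gR_smul_left, gR_reflXi_self, hNL, ← hωsq]
    field_simp
  · rw [gR_smul_left, gR_reflXi_left]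
    have : 0 < omegaL κ τ ε p NL := by linarith
    have : 0 ≤ -gL κ τ p NL xi := by linarith
    positivity
  · rw [gR_smul_left, gR_reflXi_left, hv, neg_zero, mul_zero]

/-- Proposition 2.1, pointwise: properties of `ω_L` and of the
Riemannian unit normal `N_R`. -/
theorem prop_2_1 (κ τ : ℝ) (hτ : τ ≠ 0) (ε : ℝ) (hε : ε = -1 ∨ ε = 1)
    (p : V3) (hp : p ∈ Dset κ) (NL : V3)
    (hNL : gL κ τ p NL NL = ε) (hle : gL κ τ p NL xi ≤ 0) :
    1 ≤ omegaL κ τ ε p NL ∧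
    gR κ τ p (NRof κ τ ε p NL) (NRof κ τ ε p NL) = 1 ∧
    0 ≤ gR κ τ p (NRof κ τ ε p NL) xi ∧
    ∀ v : V3, gL κ τ p NL v = 0 → gR κ τ p (NRof κ τ ε p NL) v = 0 :=
  prop_2_1_general κ τ ε hε p NL hNL hle

end
end

section
/- With ε, p, N_L, ω_L and N_R as in the context, for every vector v ∈ ℝ³ one has g_R(N_R, v) = −(1/ω_L) g_L(N_L, v). -/
noncomputable section

open Real

/- `g_R` and `g_L` differ only in the sign of the square of the vertical form
`θ = dz + τλ(y dx − x dy)`, and `θ(u) = −g_L(u, ξ)`; hence `g_R = g_L + 2 θ ⊗ θ`.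
Writing `N_R` out, the `ξ`-component `√(2(ω_L² − ε)) = −2 g_L(N_L, ξ)` exactly cancels
the correction term `2 θ(N_L) θ(v)`. -/

section Metrics

variable (κ τ : ℝ) (p : V3)

theorem gL_comm (u v : V3) : gL κ τ p u v = gL κ τ p v u := by
  unfold gL
  ring

theorem gR_eq_gL_add (u v : V3) :
    gR κ τ p u v = gL κ τ p u v + 2 * gL κ τ p u xi * gL κ τ p xi v := by
  simp only [gR, gL, xi, E3]
  ring

theorem gR_xi_left (v : V3) : gR κ τ p xi v = -gL κ τ p xi v := by
  simp only [gR, gL, xi, E3]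
  ring

theorem gR_self_nonneg (u : V3) : 0 ≤ gR κ τ p u u := by
  simp only [gR, ← sq]
  positivity

theorem gR_NRof (ε : ℝ) (N v : V3) :
    gR κ τ p (NRof κ τ ε p N) v =
      1 / omegaL κ τ ε p N *
        (√(2 * (omegaL κ τ ε p N ^ 2 - ε)) * gR κ τ p xi v - gR κ τ p N v) := by
  simp only [NRof, gR, xi, E3, Prod.smul_fst, Prod.smul_snd, Prod.fst_sub, Prod.snd_sub,
    smul_eq_mul]
  ring

theorem omegaL_sq {ε : ℝ} {N : V3} (hN : gL κ τ p N N = ε) :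
    omegaL κ τ ε p N ^ 2 = ε + 2 * gL κ τ p N xi ^ 2 := by
  have hnonneg : 0 ≤ ε + 2 * gL κ τ p N xi ^ 2 := by
    have h := gR_eq_gL_add κ τ p N N
    rw [gL_comm κ τ p xi N, hN] at h
    nlinarith [gR_self_nonneg κ τ p N]
  exact sq_sqrt hnonneg

theorem sqrt_two_mul_omegaL_sq_sub {ε : ℝ} {N : V3} (hN : gL κ τ p N N = ε)
    (hle : gL κ τ p N xi ≤ 0) :
    √(2 * (omegaL κ τ ε p N ^ 2 - ε)) = -2 * gL κ τ p N xi := by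
  rw [omegaL_sq κ τ p hN, show 2 * (ε + 2 * gL κ τ p N xi ^ 2 - ε) = (-2 * gL κ τ p N xi) ^ 2
    by ring, sqrt_sq (by linarith)]

end Metrics

theorem gR_NR_eq_general (κ τ : ℝ) (ε : ℝ)
    (p : V3) (NL : V3)
    (hNL : gL κ τ p NL NL = ε) (hle : gL κ τ p NL xi ≤ 0) (v : V3) :
    gR κ τ p (NRof κ τ ε p NL) v = -(1 / omegaL κ τ ε p NL) * gL κ τ p NL v := by
  rw [gR_NRof, sqrt_two_mul_omegaL_sq_sub κ τ p hNL hle, gR_eq_gL_add κ τ p NL v,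
    gR_xi_left]
  ring

/-- `g_R(N_R, v) = −(1/ω_L) g_L(N_L, v)` for every `v`. -/
theorem gR_NR_eq (κ τ : ℝ) (hτ : τ ≠ 0) (ε : ℝ) (hε : ε = -1 ∨ ε = 1)
    (p : V3) (hp : p ∈ Dset κ) (NL : V3)
    (hNL : gL κ τ p NL NL = ε) (hle : gL κ τ p NL xi ≤ 0) (v : V3) :
    gR κ τ p (NRof κ τ ε p NL) v = -(1 / omegaL κ τ ε p NL) * gL κ τ p NL v :=
  gR_NR_eq_general κ τ ε p NL hNL hle v

end
end

section
/- (Corollary 3.1) In the smooth normal field framework of the context, at every p ∈ U and for all tangent vectors u, v ∈ P_p one has g_R(A_R u, v) = −(1/ω_L)( g_L(A_L u, v) − τ( g_R(J_L u, v) + g_R(J_L v, u) ) ). -/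
noncomputable section

open Real

section Alg

variable {κ τ : ℝ} {q w w' v : V3} {r : ℝ}

lemma den_pos {κ : ℝ} {q : V3} (hq : q ∈ Dset κ) :
    0 < 1 + κ / 4 * (q.1 ^ 2 + q.2.1 ^ 2) := by
  rcases lt_or_ge κ 0 with h | h
  · have h1 := hq h
    have hκ : κ ≠ 0 := ne_of_lt h
    have h4 : κ * (-4 / κ) = -4 := by rw [mul_comm]; exact div_mul_cancel₀ (-4) hκ
    nlinarith [mul_lt_mul_of_neg_left h1 h]
  · nlinarith [sq_nonneg q.1, sq_nonneg q.2.1]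

lemma lam_ne {κ : ℝ} {q : V3} (hq : q ∈ Dset κ) : lam κ q ≠ 0 :=
  one_div_ne_zero (den_pos hq).ne'

-- linearity of gR in the left slot
lemma gR_smul_left_s13 : gR κ τ q (r • w) v = r * gR κ τ q w v := by
  simp only [gR, Prod.smul_fst, Prod.smul_snd, smul_eq_mul]; ring

lemma gR_add_left : gR κ τ q (w + w') v = gR κ τ q w v + gR κ τ q w' v := by
  simp only [gR, Prod.fst_add, Prod.snd_add]; ring

lemma gR_sub_left : gR κ τ q (w - w') v = gR κ τ q w v - gR κ τ q w' v := by
  simp only [gR, Prod.fst_sub, Prod.snd_sub]; ring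

lemma gR_neg_left : gR κ τ q (-w) v = -gR κ τ q w v := by
  simp only [gR, Prod.fst_neg, Prod.snd_neg]; ring

lemma gL_smul_left : gL κ τ q (r • w) v = r * gL κ τ q w v := by
  simp only [gL, Prod.smul_fst, Prod.smul_snd, smul_eq_mul]; ring

lemma gL_add_left : gL κ τ q (w + w') v = gL κ τ q w v + gL κ τ q w' v := by
  simp only [gL, Prod.fst_add, Prod.snd_add]; ring

lemma gL_sub_left : gL κ τ q (w - w') v = gL κ τ q w v - gL κ τ q w' v := by
  simp only [gL, Prod.fst_sub, Prod.snd_sub]; ring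

lemma gL_neg_left : gL κ τ q (-w) v = -gL κ τ q w v := by
  simp only [gL, Prod.fst_neg, Prod.snd_neg]; ring

-- c linearity in the vector
lemma c1_smul : c1 κ τ q (r • w) = r * c1 κ τ q w := by
  simp only [c1, gR, Prod.smul_fst, Prod.smul_snd, smul_eq_mul]; ring

lemma c2_smul : c2 κ τ q (r • w) = r * c2 κ τ q w := by
  simp only [c2, gR, Prod.smul_fst, Prod.smul_snd, smul_eq_mul]; ring

lemma c3_smul : c3 κ τ q (r • w) = r * c3 κ τ q w := by
  simp only [c3, gR, Prod.smul_fst, Prod.smul_snd, smul_eq_mul]; ring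

lemma c1_sub : c1 κ τ q (w - w') = c1 κ τ q w - c1 κ τ q w' := by
  simp only [c1, gR, Prod.fst_sub, Prod.snd_sub]; ring

lemma c2_sub : c2 κ τ q (w - w') = c2 κ τ q w - c2 κ τ q w' := by
  simp only [c2, gR, Prod.fst_sub, Prod.snd_sub]; ring

lemma c3_sub : c3 κ τ q (w - w') = c3 κ τ q w - c3 κ τ q w' := by
  simp only [c3, gR, Prod.fst_sub, Prod.snd_sub]; ring

-- explicit formulas for the frame coefficients
lemma c1_eq (hl : lam κ q ≠ 0) :
    c1 κ τ q w = lam κ q * (w.1 * Real.cos (κ / (2 * τ) * q.2.2)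
      + w.2.1 * Real.sin (κ / (2 * τ) * q.2.2)) := by
  simp only [c1, gR, E1]; field_simp
  ring

lemma c2_eq (hl : lam κ q ≠ 0) :
    c2 κ τ q w = lam κ q * (-(w.1 * Real.sin (κ / (2 * τ) * q.2.2))
      + w.2.1 * Real.cos (κ / (2 * τ) * q.2.2)) := by
  simp only [c2, gR, E2]; field_simp
  ring

lemma c3_eq : c3 κ τ q w = w.2.2 + τ * lam κ q * (q.2.1 * w.1 - q.1 * w.2.1) := by
  simp only [c3, gR, E3]; ring

lemma c1_xi (hl : lam κ q ≠ 0) : c1 κ τ q xi = 0 := by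
  simp [c1_eq hl, xi, E3]

lemma c2_xi (hl : lam κ q ≠ 0) : c2 κ τ q xi = 0 := by
  simp [c2_eq hl, xi, E3]

lemma c3_xi : c3 κ τ q xi = 1 := by
  simp [c3_eq, xi, E3]

lemma gL_xi : gL κ τ q w xi = -c3 κ τ q w := by
  simp only [gL, c3, gR, xi, E3]; ring

-- gR/gL of frame fields against arbitrary vectors
lemma gR_E3 : gR κ τ q E3 v = c3 κ τ q v := by
  simp only [gR, c3, E3]; ring

lemma gL_E3 : gL κ τ q E3 v = -c3 κ τ q v := by
  simp only [gL, c3, gR, E3]; ring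

lemma gR_E1 (hl : lam κ q ≠ 0) : gR κ τ q (E1 κ τ q) v = c1 κ τ q v := by
  rw [c1_eq hl]
  simp only [gR, E1]; field_simp
  ring

lemma gR_E2 (hl : lam κ q ≠ 0) : gR κ τ q (E2 κ τ q) v = c2 κ τ q v := by
  rw [c2_eq hl]
  simp only [gR, E2]; field_simp
  ring

lemma gL_E1 (hl : lam κ q ≠ 0) : gL κ τ q (E1 κ τ q) v = c1 κ τ q v := by
  rw [c1_eq hl]
  simp only [gL, E1]; field_simp
  ring

lemma gL_E2 (hl : lam κ q ≠ 0) : gL κ τ q (E2 κ τ q) v = c2 κ τ q v := by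
  rw [c2_eq hl]
  simp only [gL, E2]; field_simp
  ring

-- gL in frame coordinates
lemma gL_coords (hl : lam κ q ≠ 0) :
    gL κ τ q w v = c1 κ τ q w * c1 κ τ q v + c2 κ τ q w * c2 κ τ q v
      - c3 κ τ q w * c3 κ τ q v := by
  have hcs := Real.sin_sq_add_cos_sq (κ / (2 * τ) * q.2.2)
  rw [c1_eq hl, c1_eq hl, c2_eq hl, c2_eq hl, c3_eq, c3_eq]
  simp only [gL]
  linear_combination (-(lam κ q ^ 2 * (w.1 * v.1 + w.2.1 * v.2.1))) * hcs

end Alg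
section Deriv

lemma diff_n1 {κ τ : ℝ} {NL : V3 → V3} {U : Set V3} (hUopen : IsOpen U)
    (hUD : U ⊆ Dset κ) {p : V3} (hp : p ∈ U) (hN : DifferentiableAt ℝ NL p) :
    DifferentiableAt ℝ (fun q => c1 κ τ q (NL q)) p := by
  have hden : (1 : ℝ) + κ / 4 * (p.1 ^ 2 + p.2.1 ^ 2) ≠ 0 := (den_pos (hUD hp)).ne'
  have hlam : DifferentiableAt ℝ (fun q : V3 => lam κ q) p := by
    simp only [lam]; fun_prop (disch := assumption)
  have heq : (fun q => c1 κ τ q (NL q)) =ᶠ[nhds p]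
      (fun q => lam κ q * ((NL q).1 * Real.cos (κ / (2 * τ) * q.2.2)
        + (NL q).2.1 * Real.sin (κ / (2 * τ) * q.2.2))) := by
    filter_upwards [hUopen.mem_nhds hp] with q hq
    exact c1_eq (lam_ne (hUD hq))
  exact DifferentiableAt.congr_of_eventuallyEq (by fun_prop) heq

lemma diff_n2 {κ τ : ℝ} {NL : V3 → V3} {U : Set V3} (hUopen : IsOpen U)
    (hUD : U ⊆ Dset κ) {p : V3} (hp : p ∈ U) (hN : DifferentiableAt ℝ NL p) :
    DifferentiableAt ℝ (fun q => c2 κ τ q (NL q)) p := by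
  have hden : (1 : ℝ) + κ / 4 * (p.1 ^ 2 + p.2.1 ^ 2) ≠ 0 := (den_pos (hUD hp)).ne'
  have hlam : DifferentiableAt ℝ (fun q : V3 => lam κ q) p := by
    simp only [lam]; fun_prop (disch := assumption)
  have heq : (fun q => c2 κ τ q (NL q)) =ᶠ[nhds p]
      (fun q => lam κ q * (-((NL q).1 * Real.sin (κ / (2 * τ) * q.2.2))
        + (NL q).2.1 * Real.cos (κ / (2 * τ) * q.2.2))) := by
    filter_upwards [hUopen.mem_nhds hp] with q hq
    exact c2_eq (lam_ne (hUD hq))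
  exact DifferentiableAt.congr_of_eventuallyEq (by fun_prop) heq

lemma diff_n3 {κ τ : ℝ} {NL : V3 → V3} {U : Set V3} (hUopen : IsOpen U)
    (hUD : U ⊆ Dset κ) {p : V3} (hp : p ∈ U) (hN : DifferentiableAt ℝ NL p) :
    DifferentiableAt ℝ (fun q => c3 κ τ q (NL q)) p := by
  have hden : (1 : ℝ) + κ / 4 * (p.1 ^ 2 + p.2.1 ^ 2) ≠ 0 := (den_pos (hUD hp)).ne'
  have hlam : DifferentiableAt ℝ (fun q : V3 => lam κ q) p := by
    simp only [lam]; fun_prop (disch := assumption)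
  simp only [c3_eq]
  fun_prop

end Deriv

set_option maxHeartbeats 2000000 in
/-- Corollary 3.1: relation between the second fundamental
forms. -/
theorem cor_3_1 (κ τ : ℝ) (hτ : τ ≠ 0) (ε : ℝ) (hε : ε = -1 ∨ ε = 1)
    (U : Set V3) (hUopen : IsOpen U) (hUD : U ⊆ Dset κ)
    (NL : V3 → V3) (hNsmooth : ContDiffOn ℝ (⊤ : ℕ∞) NL U)
    (hunit : ∀ q ∈ U, gL κ τ q (NL q) (NL q) = ε)
    (hle : ∀ q ∈ U, gL κ τ q (NL q) xi ≤ 0)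
    (p : V3) (hp : p ∈ U) (u v : V3)
    (hu : gL κ τ p (NL p) u = 0) (hv : gL κ τ p (NL p) v = 0) :
    gR κ τ p (AR κ τ ε NL p u) v =
      -(1 / omegaL κ τ ε p (NL p)) *
        (gL κ τ p (AL κ τ NL p u) v -
          τ * (gR κ τ p (JL κ τ p (NL p) u) v + gR κ τ p (JL κ τ p (NL p) v) u)) := by
  have hlp : lam κ p ≠ 0 := lam_ne (hUD hp)
  have hNd : DifferentiableAt ℝ NL p :=
    (hNsmooth.differentiableOn (by simp)).differentiableAt (hUopen.mem_nhds hp)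
  -- frame coefficient functions of the normal
  set n1 : V3 → ℝ := fun q => c1 κ τ q (NL q) with hn1def
  set n2 : V3 → ℝ := fun q => c2 κ τ q (NL q) with hn2def
  set n3 : V3 → ℝ := fun q => c3 κ τ q (NL q) with hn3def
  have hd1 : DifferentiableAt ℝ n1 p := diff_n1 hUopen hUD hp hNd
  have hd2 : DifferentiableAt ℝ n2 p := diff_n2 hUopen hUD hp hNd
  have hd3 : DifferentiableAt ℝ n3 p := diff_n3 hUopen hUD hp hNd
  -- unit condition in coordinates on U
  have hunit' : ∀ q ∈ U, n1 q ^ 2 + n2 q ^ 2 - n3 q ^ 2 = ε := by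
    intro q hq
    have := hunit q hq
    rw [gL_coords (lam_ne (hUD hq))] at this
    simpa [pow_two] using this
  have hn3nonneg : ∀ q ∈ U, 0 ≤ n3 q := by
    intro q hq
    have := hle q hq
    rw [gL_xi] at this
    simpa using this
  have harg : ∀ q ∈ U, (1 : ℝ) ≤ ε + 2 * n3 q ^ 2 := by
    intro q hq
    have h1 := hunit' q hq
    rcases hε with h | h <;> nlinarith [sq_nonneg (n1 q), sq_nonneg (n2 q), sq_nonneg (n3 q)]
  -- omega in coordinates
  have homega_eq : ∀ q, omegaL κ τ ε q (NL q) = Real.sqrt (ε + 2 * n3 q ^ 2) := by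
    intro q
    simp only [omegaL, gL_xi, neg_sq, hn3def]
  have hω2 : ∀ q ∈ U, omegaL κ τ ε q (NL q) ^ 2 = ε + 2 * n3 q ^ 2 := by
    intro q hq
    rw [homega_eq q]
    exact Real.sq_sqrt (by linarith [harg q hq])
  have hωpos : ∀ q ∈ U, 0 < omegaL κ τ ε q (NL q) := by
    intro q hq
    rw [homega_eq q]
    exact Real.sqrt_pos.2 (by linarith [harg q hq])
  have hWne : omegaL κ τ ε p (NL p) ≠ 0 := (hωpos p hp).ne'
  -- the coordinates of N_R
  have hNR1 : ∀ q ∈ U, c1 κ τ q (NRof κ τ ε q (NL q))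
      = -(n1 q) * (omegaL κ τ ε q (NL q))⁻¹ := by
    intro q hq
    simp only [NRof, c1_smul, c1_sub, c1_xi (lam_ne (hUD hq)), hn1def]
    ring
  have hNR2 : ∀ q ∈ U, c2 κ τ q (NRof κ τ ε q (NL q))
      = -(n2 q) * (omegaL κ τ ε q (NL q))⁻¹ := by
    intro q hq
    simp only [NRof, c2_smul, c2_sub, c2_xi (lam_ne (hUD hq)), hn2def]
    ring
  have hNR3 : ∀ q ∈ U, c3 κ τ q (NRof κ τ ε q (NL q))
      = n3 q * (omegaL κ τ ε q (NL q))⁻¹ := by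
    intro q hq
    have hs : Real.sqrt (2 * (omegaL κ τ ε q (NL q) ^ 2 - ε)) = 2 * n3 q := by
      have h2 : 2 * (omegaL κ τ ε q (NL q) ^ 2 - ε) = (2 * n3 q) ^ 2 := by
        rw [hω2 q hq]; ring
      rw [h2, Real.sqrt_sq (by linarith [hn3nonneg q hq])]
    simp only [NRof, c3_smul, c3_sub, c3_xi, hs, hn3def]
    ring
  -- derivative of omega
  have h3F := hd3.hasFDerivAt
  have hgF : HasFDerivAt (fun q => ε + 2 * n3 q ^ 2)
      ((2 : ℝ) • (n3 p • fderiv ℝ n3 p + n3 p • fderiv ℝ n3 p)) p := by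
    have := ((h3F.mul h3F).const_mul (2 : ℝ)).const_add ε
    simpa [pow_two] using this
  have hargp : (0 : ℝ) < ε + 2 * n3 p ^ 2 := by linarith [harg p hp]
  have hωF : HasFDerivAt (fun q => omegaL κ τ ε q (NL q))
      ((1 / (2 * Real.sqrt (ε + 2 * n3 p ^ 2))) •
        ((2 : ℝ) • (n3 p • fderiv ℝ n3 p + n3 p • fderiv ℝ n3 p))) p := by
    have := (Real.hasDerivAt_sqrt hargp.ne').comp_hasFDerivAt p hgF
    have heq : (fun q => omegaL κ τ ε q (NL q))
        = (Real.sqrt ·) ∘ (fun q => ε + 2 * n3 q ^ 2) := by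
      funext q; exact homega_eq q
    rw [heq]
    exact this
  set W := omegaL κ τ ε p (NL p) with hWdef
  have hWval : Real.sqrt (ε + 2 * n3 p ^ 2) = W := (homega_eq p).symm
  have hinvF : HasFDerivAt (fun q => (omegaL κ τ ε q (NL q))⁻¹)
      ((-(W ^ 2)⁻¹) • ((1 / (2 * Real.sqrt (ε + 2 * n3 p ^ 2))) •
        ((2 : ℝ) • (n3 p • fderiv ℝ n3 p + n3 p • fderiv ℝ n3 p)))) p := by
    have := (hasDerivAt_inv (x := W) hWne).comp_hasFDerivAt p hωF
    exact this
  -- the three fderiv values for the AR side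
  have hB1 : fderiv ℝ (fun q => c1 κ τ q (NRof κ τ ε q (NL q))) p u
      = -(n1 p) * ((-(W ^ 2)⁻¹) * ((1 / (2 * W)) * (2 * (n3 p * fderiv ℝ n3 p u + n3 p * fderiv ℝ n3 p u))))
        + W⁻¹ * (-(fderiv ℝ n1 p u)) := by
    have hmul : HasFDerivAt (fun q => -(n1 q) * (omegaL κ τ ε q (NL q))⁻¹)
        ((-(n1 p)) • ((-(W ^ 2)⁻¹) • ((1 / (2 * Real.sqrt (ε + 2 * n3 p ^ 2))) •
          ((2 : ℝ) • (n3 p • fderiv ℝ n3 p + n3 p • fderiv ℝ n3 p))))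
         + W⁻¹ • (-(fderiv ℝ n1 p))) p := by
      have := (hd1.hasFDerivAt.neg).mul hinvF
      exact this.congr_fderiv (by simp [hWdef])
    have heq : (fun q => c1 κ τ q (NRof κ τ ε q (NL q)))
        =ᶠ[nhds p] (fun q => -(n1 q) * (omegaL κ τ ε q (NL q))⁻¹) := by
      filter_upwards [hUopen.mem_nhds hp] with q hq using hNR1 q hq
    rw [(hmul.congr_of_eventuallyEq heq).fderiv]
    simp [hWval, ContinuousLinearMap.smul_apply, ContinuousLinearMap.add_apply,
      ContinuousLinearMap.neg_apply, smul_eq_mul]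
    ring
  have hB2 : fderiv ℝ (fun q => c2 κ τ q (NRof κ τ ε q (NL q))) p u
      = -(n2 p) * ((-(W ^ 2)⁻¹) * ((1 / (2 * W)) * (2 * (n3 p * fderiv ℝ n3 p u + n3 p * fderiv ℝ n3 p u))))
        + W⁻¹ * (-(fderiv ℝ n2 p u)) := by
    have hmul : HasFDerivAt (fun q => -(n2 q) * (omegaL κ τ ε q (NL q))⁻¹)
        ((-(n2 p)) • ((-(W ^ 2)⁻¹) • ((1 / (2 * Real.sqrt (ε + 2 * n3 p ^ 2))) •
          ((2 : ℝ) • (n3 p • fderiv ℝ n3 p + n3 p • fderiv ℝ n3 p))))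
         + W⁻¹ • (-(fderiv ℝ n2 p))) p := by
      have := (hd2.hasFDerivAt.neg).mul hinvF
      exact this.congr_fderiv (by simp [hWdef])
    have heq : (fun q => c2 κ τ q (NRof κ τ ε q (NL q)))
        =ᶠ[nhds p] (fun q => -(n2 q) * (omegaL κ τ ε q (NL q))⁻¹) := by
      filter_upwards [hUopen.mem_nhds hp] with q hq using hNR2 q hq
    rw [(hmul.congr_of_eventuallyEq heq).fderiv]
    simp [hWval, ContinuousLinearMap.smul_apply, ContinuousLinearMap.add_apply,
      ContinuousLinearMap.neg_apply, smul_eq_mul]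
    ring
  have hB3 : fderiv ℝ (fun q => c3 κ τ q (NRof κ τ ε q (NL q))) p u
      = n3 p * ((-(W ^ 2)⁻¹) * ((1 / (2 * W)) * (2 * (n3 p * fderiv ℝ n3 p u + n3 p * fderiv ℝ n3 p u))))
        + W⁻¹ * fderiv ℝ n3 p u := by
    have hmul : HasFDerivAt (fun q => n3 q * (omegaL κ τ ε q (NL q))⁻¹)
        (n3 p • ((-(W ^ 2)⁻¹) • ((1 / (2 * Real.sqrt (ε + 2 * n3 p ^ 2))) •
          ((2 : ℝ) • (n3 p • fderiv ℝ n3 p + n3 p • fderiv ℝ n3 p))))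
         + W⁻¹ • fderiv ℝ n3 p) p := by
      have := hd3.hasFDerivAt.mul hinvF
      exact this.congr_fderiv (by simp [hWdef])
    have heq : (fun q => c3 κ τ q (NRof κ τ ε q (NL q)))
        =ᶠ[nhds p] (fun q => n3 q * (omegaL κ τ ε q (NL q))⁻¹) := by
      filter_upwards [hUopen.mem_nhds hp] with q hq using hNR3 q hq
    rw [(hmul.congr_of_eventuallyEq heq).fderiv]
    simp [hWval, ContinuousLinearMap.smul_apply, ContinuousLinearMap.add_apply,
      ContinuousLinearMap.neg_apply, smul_eq_mul]
    ring
  -- tangency of v in coordinates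
  have hv' : c1 κ τ p (NL p) * c1 κ τ p v + c2 κ τ p (NL p) * c2 κ τ p v
      - c3 κ τ p (NL p) * c3 κ τ p v = 0 := by
    rw [gL_coords hlp] at hv
    exact hv
  -- assemble
  simp only [AR, AL, JL, nablaR, nablaL, wedgeL]
  rw [hB1, hB2, hB3]
  rw [hNR1 p hp, hNR2 p hp, hNR3 p hp]
  simp only [hn1def, hn2def, hn3def, ← hWdef]
  simp only [gR_neg_left, gR_add_left, gR_sub_left, gR_smul_left_s13,
    gL_neg_left, gL_add_left, gL_sub_left, gL_smul_left,
    gR_E1 hlp, gR_E2 hlp, gR_E3, gL_E1 hlp, gL_E2 hlp, gL_E3]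
  have hττ : τ * τ⁻¹ = 1 := mul_inv_cancel₀ hτ
  linear_combination (-(2 * c3 κ τ p (NL p) * fderiv ℝ (fun q => c3 κ τ q (NL q)) p u) / W ^ 3) * hv'
    + (-(2 * τ * W⁻¹ * c3 κ τ p u *
        (c1 κ τ p (NL p) * c2 κ τ p v - c2 κ τ p (NL p) * c1 κ τ p v))) * hττ

end
end
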